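/- Under assumptions (A1)–(A4) with μ > 2, for every (f1,f2), (g1,g2) ∈ 𝒦 and every η ∈ [s0,r0] one has |E1(η; f1,f2) − E1(η; g1,g2)| ≤ Ẽ1·‖(f1,f2) − (g1,g2)‖, where Ẽ1 = 2a·[Ñ1/(L1m·(μ−2)·s0^(μ−2)) + N1M·L̃1/(L1m²·(3μ−2)·s0^(3μ−2))] + D1·[K̃1/(H_inf·L1m·(2μ+ν−1)·s0^(2μ+ν−1)) + (K1M/(H_inf·L1m))·(H̃/(H_inf·(2μ+ν−1)·s0^(2μ+ν−1)) + L̃1/(L1m·(3μ+ν−1)·s0^(3μ+ν−1)))], with H_inf = (K1m/(μ+ν−1))·(s0^(−(μ+ν−1)) − r0^(−(μ+ν−1))) and H̃ = (K̃1·s0^(−(μ+ν−1)) + K̃2·r0^(−(μ+ν−1)))/(μ+ν−1). -/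

import Mathlib

open MeasureTheory Filter Topology

noncomputable section

/-- The bundle of fixed constants of the problem. -/
structure Cst where
  nu : ℝ
  mu : ℝ
  a : ℝ
  D1 : ℝ
  D2 : ℝ
  Q : ℝ
  D1s : ℝ
  D2s : ℝ
  L1m : ℝ
  L1M : ℝ
  N1m : ℝ
  N1M : ℝ
  K1m : ℝ
  K1M : ℝ
  L2m : ℝ
  L2M : ℝ
  N2m : ℝ
  N2M : ℝ
  K2m : ℝ
  K2M : ℝ
  Lt1 : ℝ
  Nt1 : ℝ
  Kt1 : ℝ
  Lt2 : ℝ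
  Nt2 : ℝ
  Kt2 : ℝ

/-- The space `C[s0,r0]`, modeled as real functions continuous on `[s0,r0]`. -/
def C1 (s0 r0 : ℝ) : Set (ℝ → ℝ) := {f | ContinuousOn f (Set.Icc s0 r0)}

/-- The set `ℳ ⊆ C_b[r0,∞)`: bounded continuous functions on `[r0,∞)` with
`f(r0) = 0` and `f(η) → -1` as `η → ∞`. -/
def Mset (r0 : ℝ) : Set (ℝ → ℝ) :=
  {f | ContinuousOn f (Set.Ici r0) ∧ (∃ C, ∀ x ∈ Set.Ici r0, |f x| ≤ C) ∧
    f r0 = 0 ∧ Tendsto f atTop (𝓝 (-1))}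

/-- Sup norm of `f` over the set `S`. -/
def supOn (S : Set ℝ) (f : ℝ → ℝ) : ℝ := ⨆ x : S, |f x.1|

/-- Norm of the difference of two pairs in `𝒦 = C[s0,r0] × ℳ`. -/
def pairNorm (s0 r0 : ℝ) (f1 f2 g1 g2 : ℝ → ℝ) : ℝ :=
  max (supOn (Set.Icc s0 r0) (f1 - g1)) (supOn (Set.Ici r0) (f2 - g2))

/-- Positivity assumptions on all the fixed constants and on `s0, r0`. -/
def PosC (c : Cst) (s0 r0 : ℝ) : Prop :=
  0 < c.a ∧ 0 < c.nu ∧ c.nu < 1 ∧ 2 < c.mu ∧ 0 < s0 ∧ s0 < r0 ∧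
  0 < c.D1 ∧ 0 < c.D2 ∧ 0 < c.Q ∧ 0 < c.D1s ∧ 0 < c.D2s ∧
  0 < c.L1m ∧ 0 < c.L1M ∧ 0 < c.N1m ∧ 0 < c.N1M ∧ 0 < c.K1m ∧ 0 < c.K1M ∧
  0 < c.L2m ∧ 0 < c.L2M ∧ 0 < c.N2m ∧ 0 < c.N2M ∧ 0 < c.K2m ∧ 0 < c.K2M ∧
  0 < c.Lt1 ∧ 0 < c.Nt1 ∧ 0 < c.Kt1 ∧ 0 < c.Lt2 ∧ 0 < c.Nt2 ∧ 0 < c.Kt2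

/-- Positivity assumptions on all the fixed constants (no `s0, r0`). -/
def PosCst (c : Cst) : Prop :=
  0 < c.a ∧ 0 < c.nu ∧ c.nu < 1 ∧ 2 < c.mu ∧
  0 < c.D1 ∧ 0 < c.D2 ∧ 0 < c.Q ∧ 0 < c.D1s ∧ 0 < c.D2s ∧
  0 < c.L1m ∧ 0 < c.L1M ∧ 0 < c.N1m ∧ 0 < c.N1M ∧ 0 < c.K1m ∧ 0 < c.K1M ∧
  0 < c.L2m ∧ 0 < c.L2M ∧ 0 < c.N2m ∧ 0 < c.N2M ∧ 0 < c.K2m ∧ 0 < c.K2M ∧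
  0 < c.Lt1 ∧ 0 < c.Nt1 ∧ 0 < c.Kt1 ∧ 0 < c.Lt2 ∧ 0 < c.Nt2 ∧ 0 < c.Kt2

/-- Assumptions (A1)–(A4): continuity of the images of `L, N, K`, the two-sided
bounds and the Lipschitz bounds. -/
def Assum (c : Cst) (s0 r0 : ℝ) (L1 N1 K1 L2 N2 K2 : (ℝ → ℝ) → ℝ → ℝ) : Prop :=
  (∀ f1 ∈ C1 s0 r0,
    ContinuousOn (L1 f1) (Set.Icc s0 r0) ∧ ContinuousOn (N1 f1) (Set.Icc s0 r0) ∧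
      ContinuousOn (K1 f1) (Set.Icc s0 r0)) ∧
  (∀ f2 ∈ Mset r0,
    ContinuousOn (L2 f2) (Set.Ici r0) ∧ ContinuousOn (N2 f2) (Set.Ici r0) ∧
      ContinuousOn (K2 f2) (Set.Ici r0)) ∧
  (∀ f1 ∈ C1 s0 r0, ∀ η ∈ Set.Icc s0 r0,
    c.L1m * η ^ c.mu ≤ L1 f1 η ∧ L1 f1 η ≤ c.L1M * η ^ c.mu ∧
    c.N1m * η ^ (-c.mu) ≤ N1 f1 η ∧ N1 f1 η ≤ c.N1M * η ^ (-c.mu) ∧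
    c.K1m * η ^ (-c.mu) ≤ K1 f1 η ∧ K1 f1 η ≤ c.K1M * η ^ (-c.mu)) ∧
  (∀ f2 ∈ Mset r0, ∀ η ∈ Set.Ici r0,
    c.L2m * η ^ c.mu ≤ L2 f2 η ∧ L2 f2 η ≤ c.L2M * η ^ c.mu ∧
    c.N2m * η ^ (-c.mu) ≤ N2 f2 η ∧ N2 f2 η ≤ c.N2M * η ^ (-c.mu) ∧
    c.K2m * η ^ (-c.mu) ≤ K2 f2 η ∧ K2 f2 η ≤ c.K2M * η ^ (-c.mu)) ∧
  (∀ f1 ∈ C1 s0 r0, ∀ g1 ∈ C1 s0 r0, ∀ η ∈ Set.Icc s0 r0,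
    |L1 f1 η - L1 g1 η| ≤ c.Lt1 * supOn (Set.Icc s0 r0) (f1 - g1) ∧
    |N1 f1 η - N1 g1 η| ≤ c.Nt1 * supOn (Set.Icc s0 r0) (f1 - g1) ∧
    |K1 f1 η - K1 g1 η| ≤ c.Kt1 * η ^ (-c.mu) * supOn (Set.Icc s0 r0) (f1 - g1)) ∧
  (∀ f2 ∈ Mset r0, ∀ g2 ∈ Mset r0, ∀ η ∈ Set.Ici r0,
    |L2 f2 η - L2 g2 η| ≤ c.Lt2 * supOn (Set.Ici r0) (f2 - g2) ∧
    |N2 f2 η - N2 g2 η| ≤ c.Nt2 * supOn (Set.Ici r0) (f2 - g2) ∧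
    |K2 f2 η - K2 g2 η| ≤ c.Kt2 * η ^ (-c.mu) * supOn (Set.Ici r0) (f2 - g2))

/-- `H(f1,f2) = ∫_{s0}^{r0} K(f1)(v)/v^ν dv + ∫_{r0}^{∞} K(f2)(v)/v^ν dv`. -/
def Hf (c : Cst) (s0 r0 : ℝ) (L1 N1 K1 L2 N2 K2 : (ℝ → ℝ) → ℝ → ℝ) (f1 f2 : ℝ → ℝ) : ℝ :=
  (∫ v in s0..r0, K1 f1 v / v ^ c.nu) + ∫ v in Set.Ioi r0, K2 f2 v / v ^ c.nu

/-- `E1(η; f1,f2)`. -/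
def E1f (c : Cst) (s0 r0 : ℝ) (L1 N1 K1 L2 N2 K2 : (ℝ → ℝ) → ℝ → ℝ) (f1 f2 : ℝ → ℝ)
    (η : ℝ) : ℝ :=
  Real.exp (-(∫ v in s0..η,
    (2 * c.a * v * (N1 f1 v / L1 f1 v)
      + c.D1 / Hf c s0 r0 L1 N1 K1 L2 N2 K2 f1 f2 * (K1 f1 v / (L1 f1 v * v ^ c.nu)))))

/-- `Φ1(η; f1,f2)`. -/
def Phi1f (c : Cst) (s0 r0 : ℝ) (L1 N1 K1 L2 N2 K2 : (ℝ → ℝ) → ℝ → ℝ) (f1 f2 : ℝ → ℝ)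
    (η : ℝ) : ℝ :=
  ∫ v in s0..η, E1f c s0 r0 L1 N1 K1 L2 N2 K2 f1 f2 v / (L1 f1 v * v ^ c.nu)

/-- `H1(η; f1,f2)`. -/
def H1f (c : Cst) (s0 r0 : ℝ) (L1 N1 K1 L2 N2 K2 : (ℝ → ℝ) → ℝ → ℝ) (f1 f2 : ℝ → ℝ)
    (η : ℝ) : ℝ :=
  ∫ v in s0..η, K1 f1 v / (v ^ c.nu * E1f c s0 r0 L1 N1 K1 L2 N2 K2 f1 f2 v)

/-- `G1(η; f1,f2)`. -/
def G1f (c : Cst) (s0 r0 : ℝ) (L1 N1 K1 L2 N2 K2 : (ℝ → ℝ) → ℝ → ℝ) (f1 f2 : ℝ → ℝ)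
    (η : ℝ) : ℝ :=
  ∫ v in s0..η, E1f c s0 r0 L1 N1 K1 L2 N2 K2 f1 f2 v
    * H1f c s0 r0 L1 N1 K1 L2 N2 K2 f1 f2 v / (L1 f1 v * v ^ c.nu)

/-- `V1(f1,f2)(η)`. -/
def V1f (c : Cst) (s0 r0 : ℝ) (L1 N1 K1 L2 N2 K2 : (ℝ → ℝ) → ℝ → ℝ) (f1 f2 : ℝ → ℝ)
    (η : ℝ) : ℝ :=
  s0 ^ c.nu * c.Q * Real.exp (-s0 ^ 2)
      * (Phi1f c s0 r0 L1 N1 K1 L2 N2 K2 f1 f2 r0 - Phi1f c s0 r0 L1 N1 K1 L2 N2 K2 f1 f2 η)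
    + c.D1s / Hf c s0 r0 L1 N1 K1 L2 N2 K2 f1 f2 ^ 2
      * (G1f c s0 r0 L1 N1 K1 L2 N2 K2 f1 f2 r0 - G1f c s0 r0 L1 N1 K1 L2 N2 K2 f1 f2 η)

/-- `E2(η; f1,f2)`. -/
def E2f (c : Cst) (s0 r0 : ℝ) (L1 N1 K1 L2 N2 K2 : (ℝ → ℝ) → ℝ → ℝ) (f1 f2 : ℝ → ℝ)
    (η : ℝ) : ℝ :=
  Real.exp (-(∫ v in r0..η,
    (2 * c.a * v * (N2 f2 v / L2 f2 v)
      + c.D2 / Hf c s0 r0 L1 N1 K1 L2 N2 K2 f1 f2 * (K2 f2 v / (L2 f2 v * v ^ c.nu)))))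

/-- `Φ2(η; f1,f2)`. -/
def Phi2f (c : Cst) (s0 r0 : ℝ) (L1 N1 K1 L2 N2 K2 : (ℝ → ℝ) → ℝ → ℝ) (f1 f2 : ℝ → ℝ)
    (η : ℝ) : ℝ :=
  ∫ v in r0..η, E2f c s0 r0 L1 N1 K1 L2 N2 K2 f1 f2 v / (L2 f2 v * v ^ c.nu)

/-- `Φ2(∞; f1,f2)`. -/
def Phi2I (c : Cst) (s0 r0 : ℝ) (L1 N1 K1 L2 N2 K2 : (ℝ → ℝ) → ℝ → ℝ) (f1 f2 : ℝ → ℝ) : ℝ :=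
  ∫ v in Set.Ioi r0, E2f c s0 r0 L1 N1 K1 L2 N2 K2 f1 f2 v / (L2 f2 v * v ^ c.nu)

/-- `H2(η; f1,f2)`. -/
def H2f (c : Cst) (s0 r0 : ℝ) (L1 N1 K1 L2 N2 K2 : (ℝ → ℝ) → ℝ → ℝ) (f1 f2 : ℝ → ℝ)
    (η : ℝ) : ℝ :=
  ∫ v in r0..η, K2 f2 v / (v ^ c.nu * E2f c s0 r0 L1 N1 K1 L2 N2 K2 f1 f2 v)

/-- `G2(η; f1,f2)`. -/
def G2f (c : Cst) (s0 r0 : ℝ) (L1 N1 K1 L2 N2 K2 : (ℝ → ℝ) → ℝ → ℝ) (f1 f2 : ℝ → ℝ)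
    (η : ℝ) : ℝ :=
  ∫ v in r0..η, E2f c s0 r0 L1 N1 K1 L2 N2 K2 f1 f2 v
    * H2f c s0 r0 L1 N1 K1 L2 N2 K2 f1 f2 v / (L2 f2 v * v ^ c.nu)

/-- `G2(∞; f1,f2) = lim_{η→∞} G2(η; f1,f2)`. -/
def G2I (c : Cst) (s0 r0 : ℝ) (L1 N1 K1 L2 N2 K2 : (ℝ → ℝ) → ℝ → ℝ) (f1 f2 : ℝ → ℝ) : ℝ :=
  limUnder atTop (G2f c s0 r0 L1 N1 K1 L2 N2 K2 f1 f2)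

/-- `V2(f1,f2)(η)`. -/
def V2f (c : Cst) (s0 r0 : ℝ) (L1 N1 K1 L2 N2 K2 : (ℝ → ℝ) → ℝ → ℝ) (f1 f2 : ℝ → ℝ)
    (η : ℝ) : ℝ :=
  (c.D2s / Hf c s0 r0 L1 N1 K1 L2 N2 K2 f1 f2 ^ 2 * G2I c s0 r0 L1 N1 K1 L2 N2 K2 f1 f2 - 1)
      * (Phi2f c s0 r0 L1 N1 K1 L2 N2 K2 f1 f2 η / Phi2I c s0 r0 L1 N1 K1 L2 N2 K2 f1 f2)
    - c.D2s / Hf c s0 r0 L1 N1 K1 L2 N2 K2 f1 f2 ^ 2 * G2f c s0 r0 L1 N1 K1 L2 N2 K2 f1 f2 η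

/-! Constants appearing in the estimates. -/

def Hinf (c : Cst) (s0 r0 : ℝ) : ℝ :=
  c.K1m / (c.mu + c.nu - 1) * (s0 ^ (-(c.mu + c.nu - 1)) - r0 ^ (-(c.mu + c.nu - 1)))

def Hsup (c : Cst) (s0 r0 : ℝ) : ℝ :=
  (c.K1M * s0 ^ (-(c.mu + c.nu - 1)) + c.K2M * r0 ^ (-(c.mu + c.nu - 1))) / (c.mu + c.nu - 1)

def Htil (c : Cst) (s0 r0 : ℝ) : ℝ :=
  (c.Kt1 * s0 ^ (-(c.mu + c.nu - 1)) + c.Kt2 * r0 ^ (-(c.mu + c.nu - 1))) / (c.mu + c.nu - 1)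

/-- Limit of `Hinf` as `r0 → ∞`. -/
def HinfI (c : Cst) (s0 : ℝ) : ℝ := c.K1m / (c.mu + c.nu - 1) * s0 ^ (-(c.mu + c.nu - 1))

/-- Limit of `Hsup` as `r0 → ∞`. -/
def HsupI (c : Cst) (s0 : ℝ) : ℝ := c.K1M * s0 ^ (-(c.mu + c.nu - 1)) / (c.mu + c.nu - 1)

/-- Limit of `Htil` as `r0 → ∞`. -/
def HtilI (c : Cst) (s0 : ℝ) : ℝ := c.Kt1 * s0 ^ (-(c.mu + c.nu - 1)) / (c.mu + c.nu - 1)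

/-- `E1inf` as a function of the value `h` of `Hinf`. -/
def E1infG (c : Cst) (s0 h : ℝ) : ℝ :=
  Real.exp (-(c.a * c.N1M / (c.L1m * (c.mu - 1) * s0 ^ (2 * c.mu - 2))
    + c.D1 * c.K1M / (h * c.L1m * (2 * c.mu + c.nu - 1) * s0 ^ (2 * c.mu + c.nu - 1))))

/-- `Ẽ1` as a function of the values `h` of `Hinf` and `ht` of `Htil`. -/
def E1tilG (c : Cst) (s0 h ht : ℝ) : ℝ :=
  2 * c.a * (c.Nt1 / (c.L1m * (c.mu - 2) * s0 ^ (c.mu - 2))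
      + c.N1M * c.Lt1 / (c.L1m ^ 2 * (3 * c.mu - 2) * s0 ^ (3 * c.mu - 2)))
    + c.D1 * (c.Kt1 / (h * c.L1m * (2 * c.mu + c.nu - 1) * s0 ^ (2 * c.mu + c.nu - 1))
      + c.K1M / (h * c.L1m)
        * (ht / (h * (2 * c.mu + c.nu - 1) * s0 ^ (2 * c.mu + c.nu - 1))
          + c.Lt1 / (c.L1m * (3 * c.mu + c.nu - 1) * s0 ^ (3 * c.mu + c.nu - 1))))

def Phi1tilG (c : Cst) (s0 h ht : ℝ) : ℝ :=
  E1tilG c s0 h ht / (c.L1m * (c.mu + c.nu - 1) * s0 ^ (c.mu + c.nu - 1))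
    + c.Lt1 / (c.L1m ^ 2 * (2 * c.mu + c.nu - 1) * s0 ^ (2 * c.mu + c.nu - 1))

def H1supG (c : Cst) (s0 h : ℝ) : ℝ :=
  c.K1M / (E1infG c s0 h * (c.mu + c.nu - 1) * s0 ^ (c.mu + c.nu - 1))

def H1tilG (c : Cst) (s0 h ht : ℝ) : ℝ :=
  (c.Kt1 + c.K1M * E1tilG c s0 h ht / E1infG c s0 h)
    / (E1infG c s0 h * (c.mu + c.nu - 1) * s0 ^ (c.mu + c.nu - 1))

def G1supG (c : Cst) (s0 h : ℝ) : ℝ :=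
  H1supG c s0 h / (c.L1m * (c.mu + c.nu - 1) * s0 ^ (c.mu + c.nu - 1))

def G1tilG (c : Cst) (s0 h ht : ℝ) : ℝ :=
  H1supG c s0 h * Phi1tilG c s0 h ht
    + H1tilG c s0 h ht / (c.L1m * (c.mu + c.nu - 1) * s0 ^ (c.mu + c.nu - 1))

/-- `ε1` as a function of the values `h` of `Hinf`, `hs` of `Hsup`, `ht` of `Htil`. -/
def eps1G (c : Cst) (s0 h hs ht : ℝ) : ℝ :=
  2 * s0 ^ c.nu * c.Q * Real.exp (-s0 ^ 2) * Phi1tilG c s0 h ht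
    + 2 * c.D1s * (2 * G1supG c s0 h * hs * ht / h ^ 4 + G1tilG c s0 h ht / h ^ 2)

def E1inf (c : Cst) (s0 r0 : ℝ) : ℝ := E1infG c s0 (Hinf c s0 r0)
def E1til (c : Cst) (s0 r0 : ℝ) : ℝ := E1tilG c s0 (Hinf c s0 r0) (Htil c s0 r0)
def Phi1til (c : Cst) (s0 r0 : ℝ) : ℝ := Phi1tilG c s0 (Hinf c s0 r0) (Htil c s0 r0)
def H1sup (c : Cst) (s0 r0 : ℝ) : ℝ := H1supG c s0 (Hinf c s0 r0)
def H1til (c : Cst) (s0 r0 : ℝ) : ℝ := H1tilG c s0 (Hinf c s0 r0) (Htil c s0 r0)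
def G1sup (c : Cst) (s0 r0 : ℝ) : ℝ := G1supG c s0 (Hinf c s0 r0)
def G1til (c : Cst) (s0 r0 : ℝ) : ℝ := G1tilG c s0 (Hinf c s0 r0) (Htil c s0 r0)
def eps1 (c : Cst) (s0 r0 : ℝ) : ℝ := eps1G c s0 (Hinf c s0 r0) (Hsup c s0 r0) (Htil c s0 r0)

/-- `j1(s0) = lim_{r0→∞} ε1(r0,s0)`: the same expression with `Hinf, Hsup, Htil`
replaced by their limits as `r0 → ∞`. -/
def j1 (c : Cst) (s0 : ℝ) : ℝ := eps1G c s0 (HinfI c s0) (HsupI c s0) (HtilI c s0)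

def E2inf (c : Cst) (s0 r0 : ℝ) : ℝ :=
  Real.exp (-(c.a * c.N2M / (c.L2m * (c.mu - 1) * r0 ^ (2 * c.mu - 2))
    + c.D2 * c.K2M / (Hinf c s0 r0 * c.L2m * (2 * c.mu + c.nu - 1) * r0 ^ (2 * c.mu + c.nu - 1))))

def E2til (c : Cst) (s0 r0 : ℝ) : ℝ :=
  2 * c.a * (c.Nt2 / (c.L2m * (c.mu - 2) * r0 ^ (c.mu - 2))
      + c.N2M * c.Lt2 / (c.L2m ^ 2 * (3 * c.mu - 2) * r0 ^ (3 * c.mu - 2)))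
    + c.D2 * (c.Kt2 / (Hinf c s0 r0 * c.L2m * (2 * c.mu + c.nu - 1) * r0 ^ (2 * c.mu + c.nu - 1))
      + c.K2M / (Hinf c s0 r0 * c.L2m)
        * (Htil c s0 r0 / (Hinf c s0 r0 * (2 * c.mu + c.nu - 1) * r0 ^ (2 * c.mu + c.nu - 1))
          + c.Lt2 / (c.L2m * (3 * c.mu + c.nu - 1) * r0 ^ (3 * c.mu + c.nu - 1))))

def Phi2til (c : Cst) (s0 r0 : ℝ) : ℝ :=
  E2til c s0 r0 / (c.L2m * (c.mu + c.nu - 1) * r0 ^ (c.mu + c.nu - 1))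
    + c.Lt2 / (c.L2m ^ 2 * (2 * c.mu + c.nu - 1) * r0 ^ (2 * c.mu + c.nu - 1))

/-- `Φ2inf(∞)(r0,s0)`. -/
def Phi2infC (c : Cst) (s0 r0 : ℝ) : ℝ :=
  E2inf c s0 r0 / (c.L2M * (c.mu + c.nu - 1) * r0 ^ (c.mu + c.nu - 1))

/-- `Φ2sup(r0)`. -/
def Phi2supC (c : Cst) (r0 : ℝ) : ℝ := 1 / (c.L2m * (c.mu + c.nu - 1) * r0 ^ (c.mu + c.nu - 1))

def H2sup (c : Cst) (s0 r0 : ℝ) : ℝ :=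
  c.K2M / (E2inf c s0 r0 * (c.mu + c.nu - 1) * r0 ^ (c.mu + c.nu - 1))

def H2til (c : Cst) (s0 r0 : ℝ) : ℝ :=
  (c.Kt2 + c.K2M * E2til c s0 r0 / E2inf c s0 r0)
    / (E2inf c s0 r0 * (c.mu + c.nu - 1) * r0 ^ (c.mu + c.nu - 1))

def G2sup (c : Cst) (s0 r0 : ℝ) : ℝ :=
  H2sup c s0 r0 / (c.L2m * (c.mu + c.nu - 1) * r0 ^ (c.mu + c.nu - 1))

def G2til (c : Cst) (s0 r0 : ℝ) : ℝ :=
  H2sup c s0 r0 * Phi2til c s0 r0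
    + H2til c s0 r0 / (c.L2m * (c.mu + c.nu - 1) * r0 ^ (c.mu + c.nu - 1))

def eps21 (c : Cst) (s0 r0 : ℝ) : ℝ := 2 * Phi2til c s0 r0 / Phi2infC c s0 r0

def eps22 (c : Cst) (s0 r0 : ℝ) : ℝ :=
  G2til c s0 r0 / Hinf c s0 r0 ^ 2
    + 2 * G2sup c s0 r0 * Hsup c s0 r0 * Htil c s0 r0 / Hinf c s0 r0 ^ 4

def eps23 (c : Cst) (s0 r0 : ℝ) : ℝ :=
  Phi2supC c r0 / Phi2infC c s0 r0 * eps22 c s0 r0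
    + G2sup c s0 r0 / Hinf c s0 r0 ^ 2 * eps21 c s0 r0

def eps2 (c : Cst) (s0 r0 : ℝ) : ℝ := eps21 c s0 r0 + eps22 c s0 r0 + eps23 c s0 r0

/-!
`E1` is `exp (-I)` with `I ≥ 0`, and `exp (-·)` is 1-Lipschitz on `[0, ∞)`, so it suffices to
compare the exponents. `H` is bounded below by `Hinf` and is `Htil`-Lipschitz. Applying
`|a/b - a'/b'| ≤ |a - a'|/m + |a'| |b - b'|/m²` (for `b, b' ≥ m`) to `N/L`, `K/L` and then to
`(K/L)/H`, the integrands differ pointwise by `‖(f1,f2) - (g1,g2)‖` times a sum of powers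
`v ^ (-(q + 1))`, and integrating these from `s0` produces exactly the constant `Ẽ1`.
-/

open Set

lemma abs_exp_neg_sub_exp_neg_le {x y : ℝ} (hx : 0 ≤ x) (hy : 0 ≤ y) :
    |Real.exp (-x) - Real.exp (-y)| ≤ |x - y| := by
  wlog hyx : y ≤ x generalizing x y
  · rw [abs_sub_comm, abs_sub_comm x]
    exact this hy hx (le_of_not_ge hyx)
  have hsplit : Real.exp (-x) = Real.exp (-y) * Real.exp (-(x - y)) := by
    rw [← Real.exp_add]; ring_nf
  have hle : Real.exp (-x) ≤ Real.exp (-y) := Real.exp_le_exp.2 (neg_le_neg hyx)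
  rw [abs_of_nonpos (sub_nonpos.2 hle), abs_of_nonneg (sub_nonneg.2 hyx), hsplit]
  have h1 := Real.one_sub_le_exp_neg (x - y)
  have h2 : Real.exp (-y) ≤ 1 := Real.exp_le_one_iff.2 (neg_nonpos.2 hy)
  nlinarith [Real.exp_pos (-y)]

lemma abs_div_sub_div_le {a a' b b' m M α β : ℝ} (hm : 0 < m) (hb : m ≤ b) (hb' : m ≤ b')
    (ha' : |a'| ≤ M) (hα : |a - a'| ≤ α) (hβ : |b - b'| ≤ β) :
    |a / b - a' / b'| ≤ α / m + M * β / m ^ 2 := by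
  have hb0 := hm.trans_le hb
  have hb0' := hm.trans_le hb'
  have hsplit : a / b - a' / b' = (a - a') / b + a' * (b' - b) / (b * b') := by
    field_simp; ring
  rw [hsplit]
  refine (abs_add_le _ _).trans (add_le_add ?_ ?_)
  · rw [abs_div, abs_of_pos hb0]
    exact div_le_div₀ ((abs_nonneg _).trans hα) hα hm hb
  · rw [abs_div, abs_mul, abs_of_pos (mul_pos hb0 hb0'), abs_sub_comm, sq]
    exact div_le_div₀ (mul_nonneg ((abs_nonneg _).trans ha') ((abs_nonneg _).trans hβ))
      (mul_le_mul ha' hβ (abs_nonneg _) ((abs_nonneg _).trans ha')) (mul_pos hm hm)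
      (mul_le_mul hb hb' hm.le hb0.le)

lemma zero_notMem_uIcc_of_pos {s η : ℝ} (hs : 0 < s) (hη : 0 < η) : (0 : ℝ) ∉ uIcc s η :=
  fun h => (lt_min hs hη).not_ge h.1

lemma intervalIntegrable_rpow_of_pos {s η : ℝ} (hs : 0 < s) (hη : 0 < η) (r : ℝ) :
    IntervalIntegrable (fun v => v ^ r) volume s η :=
  intervalIntegral.intervalIntegrable_rpow (Or.inr (zero_notMem_uIcc_of_pos hs hη))

lemma integral_rpow_neg_succ {s η q : ℝ} (hs : 0 < s) (hη : 0 < η) (hq : q ≠ 0) :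
    ∫ v in s..η, v ^ (-(q + 1)) = (s ^ (-q) - η ^ (-q)) / q := by
  rw [integral_rpow (Or.inr ⟨fun h => hq (by linarith), zero_notMem_uIcc_of_pos hs hη⟩),
    show -(q + 1) + 1 = -q by ring, div_neg, ← neg_div, neg_sub]

lemma integral_rpow_neg_succ_le {s η q : ℝ} (hs : 0 < s) (hsη : s ≤ η) (hq : 0 < q) :
    ∫ v in s..η, v ^ (-(q + 1)) ≤ s ^ (-q) / q := by
  rw [integral_rpow_neg_succ hs (hs.trans_le hsη) hq.ne']
  gcongr
  exact sub_le_self _ (Real.rpow_nonneg (hs.le.trans hsη) _)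

lemma integral_Ioi_rpow_neg_succ {r q : ℝ} (hr : 0 < r) (hq : 0 < q) :
    ∫ v in Ioi r, v ^ (-(q + 1)) = r ^ (-q) / q := by
  rw [integral_Ioi_rpow_of_lt (by linarith) hr, show -(q + 1) + 1 = -q by ring, div_neg,
    neg_div, neg_neg]

lemma supOn_nonneg (S : Set ℝ) (f : ℝ → ℝ) : 0 ≤ supOn S f :=
  Real.iSup_nonneg fun _ => abs_nonneg _

lemma div_rpow_eq_mul_rpow_neg_succ {v : ℝ} (hv : 0 < v) (x μ ν : ℝ) :
    x * v ^ (-μ) / v ^ ν = x * v ^ (-(μ + ν - 1 + 1)) := by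
  rw [show -(μ + ν - 1 + 1) = -μ + -ν by ring, Real.rpow_add hv, Real.rpow_neg hv.le ν]
  ring

lemma abs_div_rpow_sub_div_rpow_le {x y C v μ ν : ℝ} (hv : 0 < v) (h : |x - y| ≤ C * v ^ (-μ)) :
    |x / v ^ ν - y / v ^ ν| ≤ C * v ^ (-(μ + ν - 1 + 1)) := by
  rw [← div_rpow_eq_mul_rpow_neg_succ hv, ← sub_div, abs_div,
    abs_of_pos (Real.rpow_pos_of_pos hv ν)]
  gcongr

lemma ContinuousOn.div_rpow_const {φ : ℝ → ℝ} {S : Set ℝ} (hφ : ContinuousOn φ S)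
    (hS : ∀ v ∈ S, 0 < v) (ν : ℝ) : ContinuousOn (fun v => φ v / v ^ ν) S :=
  hφ.div (continuousOn_id.rpow_const fun v hv => Or.inl (hS v hv).ne')
    fun v hv => (Real.rpow_pos_of_pos (hS v hv) ν).ne'

def E1Integrand (c : Cst) (s0 r0 : ℝ) (L1 N1 K1 L2 N2 K2 : (ℝ → ℝ) → ℝ → ℝ) (f1 f2 : ℝ → ℝ)
    (v : ℝ) : ℝ :=
  2 * c.a * v * (N1 f1 v / L1 f1 v)
    + c.D1 / Hf c s0 r0 L1 N1 K1 L2 N2 K2 f1 f2 * (K1 f1 v / (L1 f1 v * v ^ c.nu))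

/-- Each term is `C * v ^ (-(q + 1))` with `q` one of the exponents in `Ẽ1`, so that its integral
over `[s0, η]` is at most `C * s0 ^ (-q) / q`. -/
def E1Majorant (c : Cst) (s0 r0 v : ℝ) : ℝ :=
  2 * c.a * c.Nt1 / c.L1m * v ^ (-(c.mu - 2 + 1))
    + 2 * c.a * c.N1M * c.Lt1 / c.L1m ^ 2 * v ^ (-(3 * c.mu - 2 + 1))
    + c.D1 * (c.Kt1 + c.K1M * Htil c s0 r0 / Hinf c s0 r0) / (Hinf c s0 r0 * c.L1m)
      * v ^ (-(2 * c.mu + c.nu - 1 + 1))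
    + c.D1 * c.K1M * c.Lt1 / (Hinf c s0 r0 * c.L1m ^ 2) * v ^ (-(3 * c.mu + c.nu - 1 + 1))

section Estimates

variable {c : Cst} {s0 r0 : ℝ} {L1 N1 K1 L2 N2 K2 : (ℝ → ℝ) → ℝ → ℝ} {f1 f2 g1 g2 : ℝ → ℝ}

lemma Hinf_pos (hpos : PosC c s0 r0) : 0 < Hinf c s0 r0 := by
  obtain ⟨-, hnu, -, hmu, hs0, hsr, -, -, -, -, -, -, -, -, -, hK1m, -⟩ := hpos
  exact mul_pos (div_pos hK1m (by linarith))
    (sub_pos.2 (Real.rpow_lt_rpow_of_neg hs0 hsr (by linarith)))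

lemma Hinf_le_Hf (hpos : PosC c s0 r0) (hA : Assum c s0 r0 L1 N1 K1 L2 N2 K2)
    (hf1 : f1 ∈ C1 s0 r0) (hf2 : f2 ∈ Mset r0) :
    Hinf c s0 r0 ≤ Hf c s0 r0 L1 N1 K1 L2 N2 K2 f1 f2 := by
  obtain ⟨-, hnu, -, hmu, hs0, hsr, -, -, -, -, -, -, -, -, -, -, -, -, -, -, -, hK2m, -⟩ := hpos
  obtain ⟨hcont1, -, hbd1, hbd2, -⟩ := hA
  have hq : 0 < c.mu + c.nu - 1 := by linarith
  have hr0 : 0 < r0 := hs0.trans hsr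
  have hIcc : Hinf c s0 r0 ≤ ∫ v in s0..r0, K1 f1 v / v ^ c.nu := by
    calc Hinf c s0 r0 = ∫ v in s0..r0, c.K1m * v ^ (-(c.mu + c.nu - 1 + 1)) := by
          rw [intervalIntegral.integral_const_mul, integral_rpow_neg_succ hs0 hr0 hq.ne', Hinf]
          ring
      _ ≤ ∫ v in s0..r0, K1 f1 v / v ^ c.nu := by
          refine intervalIntegral.integral_mono_on hsr.le
            ((intervalIntegrable_rpow_of_pos hs0 hr0 _).const_mul _)
            (((hcont1 f1 hf1).2.2.div_rpow_const (fun v hv => hs0.trans_le hv.1) _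
              ).intervalIntegrable_of_Icc hsr.le) fun v hv => ?_
          have hv0 : 0 < v := hs0.trans_le hv.1
          rw [← div_rpow_eq_mul_rpow_neg_succ hv0]
          gcongr
          exact (hbd1 f1 hf1 v hv).2.2.2.2.1
  have hIoi : 0 ≤ ∫ v in Ioi r0, K2 f2 v / v ^ c.nu :=
    setIntegral_nonneg measurableSet_Ioi fun v hv => by
      have hv0 : 0 < v := hr0.trans hv
      have hK := (hbd2 f2 hf2 v (Ioi_subset_Ici_self hv)).2.2.2.2.1
      exact div_nonneg ((by positivity : 0 ≤ c.K2m * v ^ (-c.mu)).trans hK) (by positivity)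
  rw [Hf]
  linarith

lemma integrableOn_K2_div_rpow (hpos : PosC c s0 r0) (hA : Assum c s0 r0 L1 N1 K1 L2 N2 K2)
    (hf2 : f2 ∈ Mset r0) : IntegrableOn (fun v => K2 f2 v / v ^ c.nu) (Ioi r0) := by
  obtain ⟨-, hnu, -, hmu, hs0, hsr, -, -, -, -, -, -, -, -, -, -, -, -, -, -, -, hK2m, -⟩ := hpos
  obtain ⟨-, hcont2, -, hbd2, -⟩ := hA
  have hr0 : 0 < r0 := hs0.trans hsr
  refine ((integrableOn_Ioi_rpow_of_lt (by linarith : -(c.mu + c.nu - 1 + 1) < -1) hr0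
    ).const_mul c.K2M).mono' ((((hcont2 f2 hf2).2.2.div_rpow_const
      (fun v hv => hr0.trans_le hv) c.nu).mono Ioi_subset_Ici_self
    ).aestronglyMeasurable measurableSet_Ioi) ?_
  filter_upwards [ae_restrict_mem measurableSet_Ioi] with v hv
  have hv0 : 0 < v := hr0.trans hv
  obtain ⟨-, -, -, -, hK, hK'⟩ := hbd2 f2 hf2 v (Ioi_subset_Ici_self hv)
  have hK0 : 0 ≤ K2 f2 v := (by positivity : 0 ≤ c.K2m * v ^ (-c.mu)).trans hK
  rw [Real.norm_eq_abs, abs_of_nonneg (by positivity), ← div_rpow_eq_mul_rpow_neg_succ hv0]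
  gcongr

lemma abs_Hf_sub_Hf_le (hpos : PosC c s0 r0) (hA : Assum c s0 r0 L1 N1 K1 L2 N2 K2)
    (hf1 : f1 ∈ C1 s0 r0) (hf2 : f2 ∈ Mset r0) (hg1 : g1 ∈ C1 s0 r0) (hg2 : g2 ∈ Mset r0) :
    |Hf c s0 r0 L1 N1 K1 L2 N2 K2 f1 f2 - Hf c s0 r0 L1 N1 K1 L2 N2 K2 g1 g2|
      ≤ Htil c s0 r0 * pairNorm s0 r0 f1 f2 g1 g2 := by
  have hint2 := integrableOn_K2_div_rpow hpos hA hf2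
  have hint2' := integrableOn_K2_div_rpow hpos hA hg2
  obtain ⟨-, hnu, -, hmu, hs0, hsr, -, -, -, -, -, -, -, -, -, -, -, -, -, -, -, -, -, -, -, hKt1,
    -, -, hKt2⟩ := hpos
  obtain ⟨hcont1, -, -, -, hlip1, hlip2⟩ := hA
  set δ := pairNorm s0 r0 f1 f2 g1 g2
  have hδ : 0 ≤ δ := (supOn_nonneg _ _).trans (le_max_left _ _)
  have hq : 0 < c.mu + c.nu - 1 := by linarith
  have hr0 : 0 < r0 := hs0.trans hsr
  have hint1 : ∀ p ∈ C1 s0 r0, IntervalIntegrable (fun v => K1 p v / v ^ c.nu) volume s0 r0 :=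
    fun p hp => ((hcont1 p hp).2.2.div_rpow_const (fun v hv => hs0.trans_le hv.1) _
      ).intervalIntegrable_of_Icc hsr.le
  have hIcc : |(∫ v in s0..r0, K1 f1 v / v ^ c.nu) - ∫ v in s0..r0, K1 g1 v / v ^ c.nu|
      ≤ c.Kt1 * δ * (s0 ^ (-(c.mu + c.nu - 1)) / (c.mu + c.nu - 1)) := by
    rw [← intervalIntegral.integral_sub (hint1 f1 hf1) (hint1 g1 hg1), ← Real.norm_eq_abs]
    calc _ ≤ ∫ v in s0..r0, c.Kt1 * δ * v ^ (-(c.mu + c.nu - 1 + 1)) := by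
          refine intervalIntegral.norm_integral_le_of_norm_le hsr.le (ae_of_all _ fun v hv => ?_)
            ((intervalIntegrable_rpow_of_pos hs0 hr0 _).const_mul _)
          have hv' : v ∈ Icc s0 r0 := Ioc_subset_Icc_self hv
          have hv0 : 0 < v := hs0.trans hv.1
          refine abs_div_rpow_sub_div_rpow_le hv0
            ((hlip1 f1 hf1 g1 hg1 v hv').2.2.trans ?_)
          rw [mul_right_comm]
          gcongr
          exact le_max_left _ _
      _ ≤ _ := by
          rw [intervalIntegral.integral_const_mul]
          gcongr
          exact integral_rpow_neg_succ_le hs0 hsr.le hq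
  have hIoi : |(∫ v in Ioi r0, K2 f2 v / v ^ c.nu) - ∫ v in Ioi r0, K2 g2 v / v ^ c.nu|
      ≤ c.Kt2 * δ * (r0 ^ (-(c.mu + c.nu - 1)) / (c.mu + c.nu - 1)) := by
    rw [← integral_sub hint2 hint2', ← integral_Ioi_rpow_neg_succ hr0 hq, ← integral_const_mul,
      ← Real.norm_eq_abs]
    refine norm_integral_le_of_norm_le
      ((integrableOn_Ioi_rpow_of_lt (by linarith) hr0).const_mul _) ?_
    filter_upwards [ae_restrict_mem measurableSet_Ioi] with v hv
    have hv0 : 0 < v := hr0.trans hv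
    refine abs_div_rpow_sub_div_rpow_le hv0
      ((hlip2 f2 hf2 g2 hg2 v (Ioi_subset_Ici_self hv)).2.2.trans ?_)
    rw [mul_right_comm]
    gcongr
    exact le_max_right _ _
  rw [Hf, Hf, add_sub_add_comm, Htil]
  calc _ ≤ _ := abs_add_le _ _
    _ ≤ _ := add_le_add hIcc hIoi
    _ = _ := by ring

lemma E1Integrand_nonneg (hpos : PosC c s0 r0) (hA : Assum c s0 r0 L1 N1 K1 L2 N2 K2)
    (hf1 : f1 ∈ C1 s0 r0) (hf2 : f2 ∈ Mset r0) {v : ℝ} (hv : v ∈ Icc s0 r0) :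
    0 ≤ E1Integrand c s0 r0 L1 N1 K1 L2 N2 K2 f1 f2 v := by
  have hH := (Hinf_pos hpos).trans_le (Hinf_le_Hf hpos hA hf1 hf2)
  obtain ⟨ha, -, -, -, hs0, -, hD1, -, -, -, -, hL1m, -, hN1m, -, hK1m, -⟩ := hpos
  obtain ⟨hL, -, hN, -, hK, -⟩ := hA.2.2.1 f1 hf1 v hv
  have hv0 : 0 < v := hs0.trans_le hv.1
  have hL0 : 0 < L1 f1 v := (by positivity : 0 < c.L1m * v ^ c.mu).trans_le hL
  have hN0 : 0 < N1 f1 v := (by positivity : 0 < c.N1m * v ^ (-c.mu)).trans_le hN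
  have hK0 : 0 < K1 f1 v := (by positivity : 0 < c.K1m * v ^ (-c.mu)).trans_le hK
  rw [E1Integrand]
  positivity

lemma continuousOn_E1Integrand (hpos : PosC c s0 r0) (hA : Assum c s0 r0 L1 N1 K1 L2 N2 K2)
    (hf1 : f1 ∈ C1 s0 r0) :
    ContinuousOn (E1Integrand c s0 r0 L1 N1 K1 L2 N2 K2 f1 f2) (Icc s0 r0) := by
  obtain ⟨-, -, -, -, hs0, -, -, -, -, -, -, hL1m, -⟩ := hpos
  obtain ⟨hcont1, -, hbd1, -⟩ := hA
  obtain ⟨hLc, hNc, hKc⟩ := hcont1 f1 hf1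
  have hpos' : ∀ v ∈ Icc s0 r0, 0 < v := fun v hv => hs0.trans_le hv.1
  have hL : ∀ v ∈ Icc s0 r0, L1 f1 v ≠ 0 := fun v hv => by
    have hv0 := hpos' v hv
    exact ((by positivity : 0 < c.L1m * v ^ c.mu).trans_le (hbd1 f1 hf1 v hv).1).ne'
  have hpow : ContinuousOn (fun v : ℝ => v ^ c.nu) (Icc s0 r0) :=
    continuousOn_id.rpow_const fun v hv => Or.inl (hpos' v hv).ne'
  exact ((continuousOn_const.mul continuousOn_id).mul (hNc.div hLc hL)).add
    (continuousOn_const.mul (hKc.div (hLc.mul hpow)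
      fun v hv => mul_ne_zero (hL v hv) (Real.rpow_pos_of_pos (hpos' v hv) _).ne'))

lemma abs_E1Integrand_sub_le (hpos : PosC c s0 r0) (hA : Assum c s0 r0 L1 N1 K1 L2 N2 K2)
    (hf1 : f1 ∈ C1 s0 r0) (hf2 : f2 ∈ Mset r0) (hg1 : g1 ∈ C1 s0 r0) (hg2 : g2 ∈ Mset r0)
    {v : ℝ} (hv : v ∈ Icc s0 r0) :
    |E1Integrand c s0 r0 L1 N1 K1 L2 N2 K2 f1 f2 v - E1Integrand c s0 r0 L1 N1 K1 L2 N2 K2 g1 g2 v|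
      ≤ pairNorm s0 r0 f1 f2 g1 g2 * E1Majorant c s0 r0 v := by
  have hh := Hinf_pos hpos
  have hHf := Hinf_le_Hf hpos hA hf1 hf2
  have hHg := Hinf_le_Hf hpos hA hg1 hg2
  have hHdiff := abs_Hf_sub_Hf_le hpos hA hf1 hf2 hg1 hg2
  obtain ⟨ha, -, -, -, hs0, -, hD1, -, -, -, -, hL1m, -, hN1m, -, hK1m, hK1M, -, -, -, -, -, -,
    hLt1, hNt1, hKt1, -⟩ := hpos
  obtain ⟨-, -, hbd1, -, hlip1, -⟩ := hA
  obtain ⟨hLf, -, -, -, -, -⟩ := hbd1 f1 hf1 v hv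
  obtain ⟨hLg, -, hNg, hNg', hKg, hKg'⟩ := hbd1 g1 hg1 v hv
  obtain ⟨hLd, hNd, hKd⟩ := hlip1 f1 hf1 g1 hg1 v hv
  set δ := pairNorm s0 r0 f1 f2 g1 g2
  set HF := Hf c s0 r0 L1 N1 K1 L2 N2 K2 f1 f2
  set HG := Hf c s0 r0 L1 N1 K1 L2 N2 K2 g1 g2
  have hv0 : 0 < v := hs0.trans_le hv.1
  have hδ1 : supOn (Icc s0 r0) (f1 - g1) ≤ δ := le_max_left _ _
  have hm : 0 < c.L1m * v ^ c.mu := by positivity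
  have hLg0 : 0 < L1 g1 v := hm.trans_le hLg
  have hLd' : |L1 f1 v - L1 g1 v| ≤ c.Lt1 * δ := hLd.trans (by gcongr)
  have hN : |N1 f1 v / L1 f1 v - N1 g1 v / L1 g1 v|
      ≤ c.Nt1 * δ / (c.L1m * v ^ c.mu)
        + c.N1M * v ^ (-c.mu) * (c.Lt1 * δ) / (c.L1m * v ^ c.mu) ^ 2 := by
    refine abs_div_sub_div_le hm hLf hLg ?_ (hNd.trans (by gcongr)) hLd'
    rwa [abs_of_nonneg ((by positivity : 0 ≤ c.N1m * v ^ (-c.mu)).trans hNg)]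
  have hK : |K1 f1 v / L1 f1 v - K1 g1 v / L1 g1 v|
      ≤ c.Kt1 * v ^ (-c.mu) * δ / (c.L1m * v ^ c.mu)
        + c.K1M * v ^ (-c.mu) * (c.Lt1 * δ) / (c.L1m * v ^ c.mu) ^ 2 := by
    refine abs_div_sub_div_le hm hLf hLg ?_ (hKd.trans (by gcongr)) hLd'
    rwa [abs_of_nonneg ((by positivity : 0 ≤ c.K1m * v ^ (-c.mu)).trans hKg)]
  have hKg_div : |K1 g1 v / L1 g1 v| ≤ c.K1M * v ^ (-c.mu) / (c.L1m * v ^ c.mu) := by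
    rw [abs_div, abs_of_nonneg ((by positivity : 0 ≤ c.K1m * v ^ (-c.mu)).trans hKg),
      abs_of_pos hLg0]
    exact div_le_div₀ (by positivity) hKg' hm hLg
  have hKH := abs_div_sub_div_le hh hHf hHg hKg_div hK hHdiff
  have hsplit : E1Integrand c s0 r0 L1 N1 K1 L2 N2 K2 f1 f2 v
      - E1Integrand c s0 r0 L1 N1 K1 L2 N2 K2 g1 g2 v
      = 2 * c.a * v * (N1 f1 v / L1 f1 v - N1 g1 v / L1 g1 v)
        + c.D1 / v ^ c.nu * (K1 f1 v / L1 f1 v / HF - K1 g1 v / L1 g1 v / HG) := by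
    rw [E1Integrand, E1Integrand]
    ring
  rw [hsplit]
  calc _ ≤ 2 * c.a * v * |N1 f1 v / L1 f1 v - N1 g1 v / L1 g1 v|
        + c.D1 / v ^ c.nu * |K1 f1 v / L1 f1 v / HF - K1 g1 v / L1 g1 v / HG| := by
        refine (abs_add_le _ _).trans_eq ?_
        rw [abs_mul (2 * c.a * v), abs_mul (c.D1 / v ^ c.nu),
          abs_of_pos (by positivity : 0 < 2 * c.a * v),
          abs_of_pos (by positivity : 0 < c.D1 / v ^ c.nu)]
    _ ≤ _ := add_le_add (mul_le_mul_of_nonneg_left hN (by positivity))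
        (mul_le_mul_of_nonneg_left hKH (by positivity))
    _ = δ * E1Majorant c s0 r0 v := by
        rw [E1Majorant, show -(c.mu - 2 + 1) = 1 + -c.mu by ring,
          show -(3 * c.mu - 2 + 1) = 1 + -c.mu + -c.mu + -c.mu by ring,
          show -(2 * c.mu + c.nu - 1 + 1) = -c.mu + -c.mu + -c.nu by ring,
          show -(3 * c.mu + c.nu - 1 + 1) = -c.mu + -c.mu + -c.mu + -c.nu by ring]
        simp only [Real.rpow_add hv0, Real.rpow_one, Real.rpow_neg hv0.le]
        field_simp
        ring

lemma intervalIntegrable_E1Majorant {η : ℝ} (hs0 : 0 < s0) (hη : 0 < η) :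
    IntervalIntegrable (E1Majorant c s0 r0) volume s0 η := by
  have hterm (C r : ℝ) : IntervalIntegrable (fun v => C * v ^ r) volume s0 η :=
    (intervalIntegrable_rpow_of_pos hs0 hη r).const_mul C
  exact (((hterm _ _).add (hterm _ _)).add (hterm _ _)).add (hterm _ _)

lemma integral_E1Majorant_le (hpos : PosC c s0 r0) {η : ℝ} (hη : s0 ≤ η) :
    ∫ v in s0..η, E1Majorant c s0 r0 v ≤ E1til c s0 r0 := by
  have hh := Hinf_pos hpos
  obtain ⟨ha, hnu, -, hmu, hs0, hsr, hD1, -, -, -, -, hL1m, -, -, hN1M, -, hK1M, -, -, -, -, -, -,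
    hLt1, hNt1, hKt1, -, -, hKt2⟩ := hpos
  have hr0 : 0 < r0 := hs0.trans hsr
  have hht : 0 ≤ Htil c s0 r0 := by
    have : 0 < c.mu + c.nu - 1 := by linarith
    rw [Htil]
    positivity
  have hterm (C r : ℝ) : IntervalIntegrable (fun v => C * v ^ r) volume s0 η :=
    (intervalIntegrable_rpow_of_pos hs0 (hs0.trans_le hη) r).const_mul C
  have hI (q : ℝ) (hq : 0 < q) := integral_rpow_neg_succ_le hs0 hη hq
  simp only [E1Majorant]
  rw [intervalIntegral.integral_add (((hterm _ _).add (hterm _ _)).add (hterm _ _)) (hterm _ _),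
    intervalIntegral.integral_add ((hterm _ _).add (hterm _ _)) (hterm _ _),
    intervalIntegral.integral_add (hterm _ _) (hterm _ _)]
  simp only [intervalIntegral.integral_const_mul]
  calc _ ≤ 2 * c.a * c.Nt1 / c.L1m * (s0 ^ (-(c.mu - 2)) / (c.mu - 2))
          + 2 * c.a * c.N1M * c.Lt1 / c.L1m ^ 2 * (s0 ^ (-(3 * c.mu - 2)) / (3 * c.mu - 2))
          + c.D1 * (c.Kt1 + c.K1M * Htil c s0 r0 / Hinf c s0 r0) / (Hinf c s0 r0 * c.L1m)
            * (s0 ^ (-(2 * c.mu + c.nu - 1)) / (2 * c.mu + c.nu - 1))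
          + c.D1 * c.K1M * c.Lt1 / (Hinf c s0 r0 * c.L1m ^ 2)
            * (s0 ^ (-(3 * c.mu + c.nu - 1)) / (3 * c.mu + c.nu - 1)) := by
        gcongr <;> exact hI _ (by linarith)
    _ = E1til c s0 r0 := by
        have : c.mu - 2 ≠ 0 := by linarith
        have : 3 * c.mu - 2 ≠ 0 := by linarith
        have : 2 * c.mu + c.nu - 1 ≠ 0 := by linarith
        have : 3 * c.mu + c.nu - 1 ≠ 0 := by linarith
        rw [E1til, E1tilG]
        simp only [Real.rpow_neg hs0.le]
        field_simp
        ring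

lemma abs_integral_E1Integrand_sub_le (hpos : PosC c s0 r0)
    (hA : Assum c s0 r0 L1 N1 K1 L2 N2 K2) (hf1 : f1 ∈ C1 s0 r0) (hf2 : f2 ∈ Mset r0)
    (hg1 : g1 ∈ C1 s0 r0) (hg2 : g2 ∈ Mset r0) {η : ℝ} (hη : η ∈ Icc s0 r0) :
    |(∫ v in s0..η, E1Integrand c s0 r0 L1 N1 K1 L2 N2 K2 f1 f2 v)
        - ∫ v in s0..η, E1Integrand c s0 r0 L1 N1 K1 L2 N2 K2 g1 g2 v|
      ≤ E1til c s0 r0 * pairNorm s0 r0 f1 f2 g1 g2 := by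
  have hsub : Icc s0 η ⊆ Icc s0 r0 := Icc_subset_Icc_right hη.2
  have hint {p q} (hp : p ∈ C1 s0 r0) :
      IntervalIntegrable (E1Integrand c s0 r0 L1 N1 K1 L2 N2 K2 p q) volume s0 η :=
    ((continuousOn_E1Integrand hpos hA hp).mono hsub).intervalIntegrable_of_Icc hη.1
  have hs0 : 0 < s0 := hpos.2.2.2.2.1
  have hδ : 0 ≤ pairNorm s0 r0 f1 f2 g1 g2 := (supOn_nonneg _ _).trans (le_max_left _ _)
  rw [← intervalIntegral.integral_sub (hint hf1) (hint hg1), ← Real.norm_eq_abs, mul_comm]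
  calc _ ≤ ∫ v in s0..η, pairNorm s0 r0 f1 f2 g1 g2 * E1Majorant c s0 r0 v :=
        intervalIntegral.norm_integral_le_of_norm_le hη.1
          (ae_of_all _ fun v hv => abs_E1Integrand_sub_le hpos hA hf1 hf2 hg1 hg2
            (hsub (Ioc_subset_Icc_self hv)))
          ((intervalIntegrable_E1Majorant hs0 (hs0.trans_le hη.1)).const_mul _)
    _ = pairNorm s0 r0 f1 f2 g1 g2 * ∫ v in s0..η, E1Majorant c s0 r0 v :=
        intervalIntegral.integral_const_mul _ _
    _ ≤ _ := by gcongr; exact integral_E1Majorant_le hpos hη.1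

end Estimates

theorem stmt4 (c : Cst) (s0 r0 : ℝ) (L1 N1 K1 L2 N2 K2 : (ℝ → ℝ) → ℝ → ℝ)
    (hpos : PosC c s0 r0) (hA : Assum c s0 r0 L1 N1 K1 L2 N2 K2)
    (f1 f2 : ℝ → ℝ) (hf1 : f1 ∈ C1 s0 r0) (hf2 : f2 ∈ Mset r0)
    (g1 g2 : ℝ → ℝ) (hg1 : g1 ∈ C1 s0 r0) (hg2 : g2 ∈ Mset r0) :
    ∀ η ∈ Set.Icc s0 r0,
      |E1f c s0 r0 L1 N1 K1 L2 N2 K2 f1 f2 η - E1f c s0 r0 L1 N1 K1 L2 N2 K2 g1 g2 η| ≤ E1til c s0 r0 * pairNorm s0 r0 f1 f2 g1 g2 := by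
  intro η hη
  have hexponent_nonneg {p q} (hp : p ∈ C1 s0 r0) (hq : q ∈ Mset r0) :
      0 ≤ ∫ v in s0..η, E1Integrand c s0 r0 L1 N1 K1 L2 N2 K2 p q v :=
    intervalIntegral.integral_nonneg hη.1 fun v hv =>
      E1Integrand_nonneg hpos hA hp hq ⟨hv.1, hv.2.trans hη.2⟩
  exact (abs_exp_neg_sub_exp_neg_le (hexponent_nonneg hf1 hf2) (hexponent_nonneg hg1 hg2)).trans
    (abs_integral_E1Integrand_sub_le hpos hA hf1 hf2 hg1 hg2 hη)
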